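/- arXiv:1605.00588 — 3 statements merged into one kernel-verified Lean document; each statement's English description precedes it below -/
import Mathlib

section
/- Let ε > 0, z₀ = (q₀, p₀) ∈ ℝ^d × ℝ^d, and let g^ε_z denote the Gaussian wave packet with centre z = (q, p). Then for every x ∈ ℝ^d, (2πε)^{−d} ∫_{ℝ^{2d}} ⟨g^ε_z, g^ε_{z₀}⟩ · g^ε_z(x) dz = g^ε_{z₀}(x), where ⟨g^ε_z, g^ε_{z₀}⟩ = exp(−(1/(4ε))|z − z₀|² + (i/(2ε))(p + p₀)·(q − q₀)) and the integral is over z = (q, p) ∈ ℝ^{2d} with respect to Lebesgue measure. -/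
open MeasureTheory

/-- The Gaussian wave packet `g^ε_{(q,p)}(x) = (πε)^{-d/4}
exp(−|x−q|²/(2ε) + (i/ε) p·(x−q))`. -/
noncomputable def gaussWP (ε : ℝ) {d : ℕ} (q p x : EuclideanSpace ℝ (Fin d)) : ℂ :=
  (((Real.pi * ε) ^ (-(d : ℝ) / 4) : ℝ) : ℂ) *
    Complex.exp (((-(‖x - q‖ ^ 2) / (2 * ε) : ℝ) : ℂ) +
      Complex.I / (ε : ℂ) * ((inner ℝ p (x - q) : ℝ) : ℂ))

/-! In the centred coordinates `y = q - q₀`, `u = p - p₀` the integrand is a Gaussian in `u`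
with linear term `(i/ε)⟪x - q₀ - y/2, u⟫`. Integrating out `u` leaves a real Gaussian in `y`
with linear term `(2/ε)⟪x - q₀, y⟫`, whose integral carries exactly the exponent of
`g^ε_{z₀}(x)`; the two Gaussian normalisations `(4πε)^{d/2} (πε)^{d/2}` cancel `(2πε)^d`. -/

open Complex
open scoped Real RealInnerProductSpace

section Gaussian

variable {V : Type*} [NormedAddCommGroup V] [InnerProductSpace ℝ V] [FiniteDimensional ℝ V]
  [MeasurableSpace V] [BorelSpace V]

theorem integral_cexp_neg_mul_sq_norm_add_inner_add {b : ℂ} (hb : 0 < b.re) (c k : ℂ) (w : V) :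
    ∫ v : V, cexp (-b * ‖v‖ ^ 2 + c * ⟪w, v⟫ + k) =
      (π / b) ^ (Module.finrank ℝ V / 2 : ℂ) * cexp (c ^ 2 * ‖w‖ ^ 2 / (4 * b) + k) := by
  simp only [Complex.exp_add _ k, integral_mul_const,
    GaussianFourier.integral_cexp_neg_mul_sq_norm_add hb, mul_assoc]

theorem integrable_cexp_of_re_le_neg_mul_sq_norm {φ : V × V → ℂ} (hφ : Continuous φ) {β : ℝ}
    (hβ : 0 < β) (hle : ∀ z, (φ z).re ≤ -β * (‖z.1‖ ^ 2 + ‖z.2‖ ^ 2)) :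
    Integrable (fun z ↦ cexp (φ z)) := by
  have hg : Integrable (fun v : V ↦ cexp (-β * ‖v‖ ^ 2 + 0 * ⟪0, v⟫)) :=
    GaussianFourier.integrable_cexp_neg_mul_sq_norm_add (by simpa using hβ) 0 0
  refine (hg.mul_prod hg).norm.mono' (continuous_exp.comp hφ).aestronglyMeasurable
    (.of_forall fun z ↦ ?_)
  simp only [norm_mul, norm_exp, ← Real.exp_add, Real.exp_le_exp]
  simpa [mul_add, ← ofReal_pow] using hle z

end Gaussian

section Phase

variable {V : Type*} [NormedAddCommGroup V] [InnerProductSpace ℝ V]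

noncomputable def fbiPhase (ε : ℝ) (p₀ a y u : V) : ℂ :=
  -(((4 * ε)⁻¹ : ℝ) : ℂ) * ‖u‖ ^ 2 + I / ε * ⟪a - (2⁻¹ : ℝ) • y, u⟫ +
    (((-(‖y‖ ^ 2 / (4 * ε)) - ‖a - y‖ ^ 2 / (2 * ε) : ℝ) : ℂ) + I / ε * ⟪p₀, a⟫)

theorem overlap_add_packet_exponent (ε : ℝ) (q₀ p₀ x q p : V) :
    ((-(1 / (4 * ε)) * (‖q - q₀‖ ^ 2 + ‖p - p₀‖ ^ 2) : ℝ) : ℂ) +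
        I / (2 * (ε : ℂ)) * ((⟪p + p₀, q - q₀⟫ : ℝ) : ℂ) +
      (((-(‖x - q‖ ^ 2) / (2 * ε) : ℝ) : ℂ) + I / (ε : ℂ) * ((⟪p, x - q⟫ : ℝ) : ℂ)) =
    fbiPhase ε p₀ (x - q₀) (q - q₀) (p - p₀) := by
  have hx : x - q = x - q₀ - (q - q₀) := by abel
  have hp : p = p₀ + (p - p₀) := by abel
  rw [fbiPhase, hx]
  generalize q - q₀ = y, p - p₀ = u, x - q₀ = a at *
  subst hp
  simp only [inner_add_left, inner_sub_left, inner_sub_right, real_inner_smul_left,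
    real_inner_comm y u, real_inner_comm u a]
  push_cast
  ring

theorem re_fbiPhase_le {ε : ℝ} (hε : 0 < ε) (p₀ a y u : V) :
    (fbiPhase ε p₀ a y u).re ≤ -(4 * ε)⁻¹ * (‖y‖ ^ 2 + ‖u‖ ^ 2) := by
  have : 0 ≤ ‖a - y‖ ^ 2 / (2 * ε) := by positivity
  simp only [fbiPhase, add_re, mul_re, neg_re, ofReal_re, ofReal_im, div_re, I_re, I_im,
    ← ofReal_pow, mul_zero, zero_mul, zero_div, add_zero, sub_zero]
  rw [div_eq_inv_mul (‖y‖ ^ 2)]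
  linarith

theorem continuous_fbiPhase (ε : ℝ) (p₀ a : V) :
    Continuous fun z : V × V ↦ fbiPhase ε p₀ a z.1 z.2 := by
  unfold fbiPhase
  fun_prop

theorem momentum_integrated_exponent {ε : ℝ} (hε : ε ≠ 0) (p₀ a y : V) :
    (I / ε) ^ 2 * ‖a - (2⁻¹ : ℝ) • y‖ ^ 2 / (4 * (((4 * ε)⁻¹ : ℝ) : ℂ)) +
        (((-(‖y‖ ^ 2 / (4 * ε)) - ‖a - y‖ ^ 2 / (2 * ε) : ℝ) : ℂ) + I / ε * ⟪p₀, a⟫) =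
      -((ε⁻¹ : ℝ) : ℂ) * ‖y‖ ^ 2 + 2 / ε * ⟪a, y⟫ +
        (((-(3 / (2 * ε)) * ‖a‖ ^ 2 : ℝ) : ℂ) + I / ε * ⟪p₀, a⟫) := by
  simp only [← ofReal_pow, norm_sub_sq_real, norm_smul, inner_smul_right, mul_pow,
    Real.norm_eq_abs, abs_inv, abs_two]
  have : (ε : ℂ) ≠ 0 := ofReal_ne_zero.mpr hε
  push_cast
  field_simp
  rw [I_sq]
  ring

theorem position_integrated_exponent {ε : ℝ} (hε : ε ≠ 0) (p₀ a : V) :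
    (2 / ε) ^ 2 * ‖a‖ ^ 2 / (4 * ((ε⁻¹ : ℝ) : ℂ)) +
        (((-(3 / (2 * ε)) * ‖a‖ ^ 2 : ℝ) : ℂ) + I / ε * ⟪p₀, a⟫) =
      ((-(‖a‖ ^ 2) / (2 * ε) : ℝ) : ℂ) + I / ε * ⟪p₀, a⟫ := by
  have : (ε : ℂ) ≠ 0 := ofReal_ne_zero.mpr hε
  push_cast
  field_simp
  ring

end Phase

theorem cpow_half_mul_cpow_half_eq_pow {ε : ℝ} (hε : 0 < ε) (n : ℕ) :
    ((π : ℂ) / (((4 * ε)⁻¹ : ℝ) : ℂ)) ^ (n / 2 : ℂ) *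
        ((π : ℂ) / ((ε⁻¹ : ℝ) : ℂ)) ^ (n / 2 : ℂ) =
      (((2 * π * ε) ^ n : ℝ) : ℂ) := by
  have hn : (n / 2 : ℂ) = ((n / 2 : ℝ) : ℂ) := by push_cast; ring
  simp only [ofReal_inv, div_inv_eq_mul, hn]
  rw [← ofReal_mul, ← ofReal_mul, ← ofReal_cpow (by positivity),
    ← ofReal_cpow (by positivity), ← ofReal_mul, ← Real.mul_rpow (by positivity) (by positivity),
    show π * (4 * ε) * (π * ε) = (2 * π * ε) ^ 2 by ring, ← Real.rpow_natCast _ 2,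
    ← Real.rpow_mul (by positivity), ← Real.rpow_natCast]
  congr 2
  ring

/-- FBI reconstruction identity for a Gaussian initial state:
`(2πε)^{−d} ∫ ⟨g^ε_z, g^ε_{z₀}⟩ g^ε_z(x) dz = g^ε_{z₀}(x)`, where the overlap
is given by its explicit formula. -/
theorem fbi_reconstruction_gaussian
    {d : ℕ} (ε : ℝ) (hε : 0 < ε)
    (q₀ p₀ : EuclideanSpace ℝ (Fin d)) (x : EuclideanSpace ℝ (Fin d)) :
    (((2 * Real.pi * ε) ^ d : ℝ)⁻¹ : ℂ) *
      ∫ z : EuclideanSpace ℝ (Fin d) × EuclideanSpace ℝ (Fin d),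
        Complex.exp
          ((((-(1 / (4 * ε)) * (‖z.1 - q₀‖ ^ 2 + ‖z.2 - p₀‖ ^ 2) : ℝ)) : ℂ) +
            Complex.I / (2 * (ε : ℂ)) * ((inner ℝ (z.2 + p₀) (z.1 - q₀) : ℝ) : ℂ)) *
          gaussWP ε z.1 z.2 x
      = gaussWP ε q₀ p₀ x := by
  have hre : ∀ {b : ℝ}, 0 < b → 0 < (b : ℂ).re := fun h ↦ by rwa [ofReal_re]
  simp_rw [gaussWP, mul_left_comm (cexp _), ← Complex.exp_add, overlap_add_packet_exponent,
    integral_const_mul]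
  rw [Measure.volume_eq_prod, ← integral_add_right_eq_self _ (q₀, p₀)]
  simp only [Prod.fst_add, Prod.snd_add, add_sub_cancel_right]
  rw [integral_prod _ (integrable_cexp_of_re_le_neg_mul_sq_norm (continuous_fbiPhase ..)
    (by positivity) fun z ↦ re_fbiPhase_le hε p₀ (x - q₀) z.1 z.2)]
  simp_rw [fbiPhase,
    integral_cexp_neg_mul_sq_norm_add_inner_add (hre (by positivity : 0 < (4 * ε)⁻¹)),
    momentum_integrated_exponent hε.ne', integral_const_mul,
    integral_cexp_neg_mul_sq_norm_add_inner_add (hre (inv_pos.mpr hε)),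
    position_integrated_exponent hε.ne', finrank_euclideanSpace_fin]
  have hC : (((2 * π * ε) ^ d : ℝ) : ℂ) ≠ 0 := ofReal_ne_zero.mpr (by positivity)
  rw [← mul_assoc (_ ^ _), cpow_half_mul_cpow_half_eq_pow hε]
  field_simp
end

section
/- Let ε > 0 and z₁ = (q₁, p₁), z₂ = (q₂, p₂) ∈ ℝ^d × ℝ^d. Then the matrix element of the harmonic oscillator potential between two Gaussian wave packets satisfies ∫_{ℝ^d} conj(g^ε_{z₁}(x)) · (|x|²/2) · g^ε_{z₂}(x) dx = [ ∑_{k=1}^d (1/8) ( 2ε − ( (p₁ₖ − p₂ₖ) + i (q₁ₖ + q₂ₖ) )² ) ] · ⟨g^ε_{z₁}, g^ε_{z₂}⟩. -/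
open MeasureTheory

/-!
Writing `ζ = q + i p`, the product `conj g_{z₁}(x) · g_{z₂}(x)` is a constant times
`∏ₖ exp (-xₖ²/ε + cₖ xₖ + dₖ)` with `cₖ = (conj ζ₁ₖ + ζ₂ₖ)/ε`, so by Fubini the matrix element of
`|x|²/2 = ∑ₖ xₖ²/2` splits into one-dimensional Gaussian second moments. Integrating the derivative
of `xⁿ exp (b x² + c x + d)` over `ℝ` gives `n Mₙ₋₁ + 2b Mₙ₊₁ + c Mₙ = 0` for the moments `Mₙ`,
hence `M₂ = (c²/(4b²) - 1/(2b)) M₀`, that is `M₂/2 = (2ε + ε²c²)/8 · M₀` for `b = -1/ε`, and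
`ε cₖ = -i ((p₁ₖ - p₂ₖ) + i (q₁ₖ + q₂ₖ))`.
-/

open scoped Complex ComplexConjugate Nat

section GaussianMoments

lemma re_quadratic_ofReal (b c d : ℂ) (x : ℝ) :
    (b * x ^ 2 + c * x + d).re = b.re * x ^ 2 + c.re * x + d.re := by
  simp [← Complex.ofReal_pow]

lemma norm_pow_mul_cexp_quadratic_le (n : ℕ) (b c d : ℂ) (x : ℝ) :
    ‖(x : ℂ) ^ n * cexp (b * x ^ 2 + c * x + d)‖ ≤
      n ! * (‖cexp (b * x ^ 2 + (c + 1) * x + d)‖ + ‖cexp (b * x ^ 2 + (c - 1) * x + d)‖) := by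
  have h_pow : |x| ^ n ≤ n ! * Real.exp |x| := by
    have := Real.pow_div_factorial_le_exp _ (abs_nonneg x) n
    rwa [div_le_iff₀' (by positivity)] at this
  have h_exp : Real.exp |x| ≤ Real.exp x + Real.exp (-x) := by
    rcases abs_cases x with ⟨hx, -⟩ | ⟨hx, -⟩ <;> rw [hx] <;>
      linarith [Real.exp_pos x, Real.exp_pos (-x)]
  simp only [norm_mul, norm_pow, Complex.norm_real, Real.norm_eq_abs, Complex.norm_exp]
  rw [re_quadratic_ofReal, re_quadratic_ofReal, re_quadratic_ofReal]
  simp only [Complex.add_re, Complex.sub_re, Complex.one_re]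
  set Q := b.re * x ^ 2 + c.re * x + d.re
  calc |x| ^ n * Real.exp Q ≤ n ! * (Real.exp x + Real.exp (-x)) * Real.exp Q := by
        gcongr; exact h_pow.trans (by gcongr)
    _ = _ := by
        rw [show b.re * x ^ 2 + (c.re + 1) * x + d.re = Q + x by ring,
          show b.re * x ^ 2 + (c.re - 1) * x + d.re = Q + -x by ring]
        simp only [Real.exp_add]
        ring

lemma hasDerivAt_pow_mul_cexp_quadratic (n : ℕ) (b c d : ℂ) (x : ℝ) :
    HasDerivAt (fun t : ℝ ↦ (t : ℂ) ^ n * cexp (b * t ^ 2 + c * t + d))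
      ((n * (x : ℂ) ^ (n - 1) + 2 * b * (x : ℂ) ^ (n + 1) + c * (x : ℂ) ^ n) *
        cexp (b * x ^ 2 + c * x + d)) x := by
  have h : HasDerivAt (fun t : ℂ ↦ t ^ n * cexp (b * t ^ 2 + c * t + d))
      (n * (x : ℂ) ^ (n - 1) * cexp (b * x ^ 2 + c * x + d) +
        (x : ℂ) ^ n * (cexp (b * x ^ 2 + c * x + d) * (b * (2 * x) + c))) x := by
    refine (hasDerivAt_pow n _).mul (HasDerivAt.cexp ?_)
    simpa using (((hasDerivAt_pow 2 (x : ℂ)).const_mul b).add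
      ((hasDerivAt_id _).const_mul c)).add_const d
  convert h.comp_ofReal using 1
  ring

variable {b : ℂ} (hb : b.re < 0) (c d : ℂ)
include hb

lemma integrable_pow_mul_cexp_quadratic (n : ℕ) :
    Integrable fun x : ℝ ↦ (x : ℂ) ^ n * cexp (b * x ^ 2 + c * x + d) :=
  ((((integrable_cexp_quadratic' hb (c + 1) d).norm.add
    (integrable_cexp_quadratic' hb (c - 1) d).norm).const_mul (n ! : ℝ))).mono'
    (by fun_prop) (.of_forall (norm_pow_mul_cexp_quadratic_le n b c d))

lemma integral_pow_mul_cexp_quadratic_recurrence (n : ℕ) :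
    n * (∫ x : ℝ, (x : ℂ) ^ (n - 1) * cexp (b * x ^ 2 + c * x + d)) +
      2 * b * (∫ x : ℝ, (x : ℂ) ^ (n + 1) * cexp (b * x ^ 2 + c * x + d)) +
      c * (∫ x : ℝ, (x : ℂ) ^ n * cexp (b * x ^ 2 + c * x + d)) = 0 := by
  set F : ℝ → ℂ := fun x ↦ cexp (b * x ^ 2 + c * x + d)
  have hi (k : ℕ) (a : ℂ) : Integrable fun x : ℝ ↦ a * ((x : ℂ) ^ k * F x) :=
    (integrable_pow_mul_cexp_quadratic hb c d k).const_mul a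
  have hi₂ : Integrable fun x : ℝ ↦
      n * ((x : ℂ) ^ (n - 1) * F x) + 2 * b * ((x : ℂ) ^ (n + 1) * F x) := (hi _ _).add (hi _ _)
  have hi₃ : Integrable fun x : ℝ ↦ n * ((x : ℂ) ^ (n - 1) * F x) +
      2 * b * ((x : ℂ) ^ (n + 1) * F x) + c * ((x : ℂ) ^ n * F x) := hi₂.add (hi _ _)
  calc _ = ∫ x : ℝ, n * ((x : ℂ) ^ (n - 1) * F x) + 2 * b * ((x : ℂ) ^ (n + 1) * F x) +
        c * ((x : ℂ) ^ n * F x) := by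
        rw [integral_add hi₂ (hi _ _), integral_add (hi _ _) (hi _ _), integral_const_mul,
          integral_const_mul, integral_const_mul]
    _ = ∫ x : ℝ, (n * (x : ℂ) ^ (n - 1) + 2 * b * (x : ℂ) ^ (n + 1) + c * (x : ℂ) ^ n) * F x := by
        congr 1; ext x; ring
    _ = 0 := integral_eq_zero_of_hasDerivAt_of_integrable
        (hasDerivAt_pow_mul_cexp_quadratic n b c d) (hi₃.congr (.of_forall fun x ↦ by ring))
        (by simpa using hi n 1)

lemma integral_mul_cexp_quadratic :
    ∫ x : ℝ, (x : ℂ) * cexp (b * x ^ 2 + c * x + d) =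
      -(c / (2 * b)) * ∫ x : ℝ, cexp (b * x ^ 2 + c * x + d) := by
  have hb0 : b ≠ 0 := by rintro rfl; simp at hb
  have h := integral_pow_mul_cexp_quadratic_recurrence hb c d 0
  simp only [CharP.cast_eq_zero, zero_mul, zero_add, pow_one, pow_zero, one_mul] at h
  generalize (∫ x : ℝ, cexp (b * x ^ 2 + c * x + d)) = M₀ at h ⊢
  generalize (∫ x : ℝ, (x : ℂ) * cexp (b * x ^ 2 + c * x + d)) = M₁ at h ⊢
  field_simp
  linear_combination h

lemma integral_sq_mul_cexp_quadratic :
    ∫ x : ℝ, (x : ℂ) ^ 2 * cexp (b * x ^ 2 + c * x + d) =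
      (c ^ 2 / (4 * b ^ 2) - 1 / (2 * b)) * ∫ x : ℝ, cexp (b * x ^ 2 + c * x + d) := by
  have hb0 : b ≠ 0 := by rintro rfl; simp at hb
  have h := integral_pow_mul_cexp_quadratic_recurrence hb c d 1
  simp only [Nat.cast_one, one_mul, Nat.sub_self, pow_zero, one_add_one_eq_two, pow_one,
    integral_mul_cexp_quadratic hb] at h
  generalize (∫ x : ℝ, cexp (b * x ^ 2 + c * x + d)) = M₀ at h ⊢
  generalize (∫ x : ℝ, (x : ℂ) ^ 2 * cexp (b * x ^ 2 + c * x + d)) = M₂ at h ⊢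
  field_simp at h ⊢
  linear_combination 2 * h

end GaussianMoments

lemma Finset.prod_update_mul_self {ι M : Type*} [Fintype ι] [DecidableEq ι] [CommMonoid M]
    (u : ι → M) (i : ι) (a : M) : ∏ j, Function.update u i (a * u i) j = a * ∏ j, u j := by
  rw [Finset.prod_update_of_mem (Finset.mem_univ i), mul_assoc,
    ← Finset.prod_eq_mul_prod_sdiff_singleton_of_mem (Finset.mem_univ i)]

lemma integral_sum_mul_prod_eq {ι 𝕜 E : Type*} [Fintype ι] [RCLike 𝕜] [MeasureSpace E]
    [SigmaFinite (volume : Measure E)] {f g : ι → E → 𝕜} {m : ι → 𝕜}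
    (hf : ∀ i, Integrable (f i)) (hgf : ∀ i, Integrable fun x ↦ g i x * f i x)
    (hm : ∀ i, ∫ x, g i x * f i x = m i * ∫ x, f i x) :
    ∫ y : ι → E, (∑ i, g i (y i)) * ∏ j, f j (y j) = (∑ i, m i) * ∫ y : ι → E, ∏ j, f j (y j) := by
  classical
  set F : ι → ι → E → 𝕜 := fun i ↦ Function.update f i fun x ↦ g i x * f i x
  have hF (i j : ι) : Integrable (F i j) := by
    rcases eq_or_ne j i with rfl | hj
    · simpa [F] using hgf j
    · simpa [F, hj] using hf j
  have h_pt (i : ι) (y : ι → E) : ∏ j, F i j (y j) = g i (y i) * ∏ j, f j (y j) := by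
    rw [← Finset.prod_update_mul_self]
    exact Finset.prod_congr rfl fun j _ ↦ Function.apply_update (fun j u ↦ u (y j)) f i _ j
  have h_int (i : ι) : ∏ j, ∫ x, F i j x = m i * ∏ j, ∫ x, f j x := by
    rw [← Finset.prod_update_mul_self, ← hm]
    exact Finset.prod_congr rfl fun j _ ↦ Function.apply_update (fun _ u ↦ ∫ x, u x) f i _ j
  calc ∫ y : ι → E, (∑ i, g i (y i)) * ∏ j, f j (y j)
      = ∫ y : ι → E, ∑ i, ∏ j, F i j (y j) := by simp only [Finset.sum_mul, h_pt]
    _ = ∑ i, ∏ j, ∫ x, F i j x := by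
        rw [integral_finsetSum _ fun i _ ↦ by exact Integrable.fintype_prod (hF i)]
        simp only [integral_fintype_prod_volume_eq_prod]
    _ = (∑ i, m i) * ∫ y : ι → E, ∏ j, f j (y j) := by
        simp only [h_int, integral_fintype_prod_volume_eq_prod, Finset.sum_mul]

noncomputable def overlapLinCoeff (ε q₁ p₁ q₂ p₂ : ℝ) : ℂ :=
  (q₁ + q₂ + Complex.I * (p₂ - p₁)) / ε

noncomputable def overlapConstCoeff (ε q₁ p₁ q₂ p₂ : ℝ) : ℂ :=
  (Complex.I * (p₁ * q₁ - p₂ * q₂) - (q₁ ^ 2 + q₂ ^ 2) / 2) / ε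

lemma conj_gaussWP_mul_gaussWP (ε : ℝ) {d : ℕ} (q₁ p₁ q₂ p₂ x : EuclideanSpace ℝ (Fin d)) :
    conj (gaussWP ε q₁ p₁ x) * gaussWP ε q₂ p₂ x =
      (((Real.pi * ε) ^ (-(d : ℝ) / 4) : ℝ) : ℂ) ^ 2 *
        ∏ k, cexp (-(ε : ℂ)⁻¹ * x k ^ 2 + overlapLinCoeff ε (q₁ k) (p₁ k) (q₂ k) (p₂ k) * x k +
          overlapConstCoeff ε (q₁ k) (p₁ k) (q₂ k) (p₂ k)) := by
  simp only [gaussWP, map_mul, ← Complex.exp_conj, map_add, map_div₀, Complex.conj_ofReal,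
    Complex.conj_I, EuclideanSpace.real_norm_sq_eq, PiLp.inner_apply, PiLp.sub_apply,
    ← Complex.exp_sum]
  rw [mul_mul_mul_comm, ← Complex.exp_add, ← sq]
  congr 2
  push_cast
  simp only [Finset.sum_div, Finset.mul_sum, ← Finset.sum_neg_distrib, ← Finset.sum_add_distrib]
  refine Finset.sum_congr rfl fun k _ ↦ ?_
  simp only [RCLike.inner_apply, Real.ringHom_apply, Complex.ofReal_mul, Complex.ofReal_sub,
    overlapLinCoeff, overlapConstCoeff]
  ring

lemma integral_sq_div_two_mul_overlap {ε : ℝ} (hε : 0 < ε) (q₁ p₁ q₂ p₂ : ℝ) (d : ℂ) :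
    ∫ t : ℝ, (t : ℂ) ^ 2 / 2 *
        cexp (-(ε : ℂ)⁻¹ * t ^ 2 + overlapLinCoeff ε q₁ p₁ q₂ p₂ * t + d) =
      1 / 8 * (2 * ε - (((p₁ - p₂ : ℝ) : ℂ) + Complex.I * ((q₁ + q₂ : ℝ) : ℂ)) ^ 2) *
        ∫ t : ℝ, cexp (-(ε : ℂ)⁻¹ * t ^ 2 + overlapLinCoeff ε q₁ p₁ q₂ p₂ * t + d) := by
  have hb : (-(ε : ℂ)⁻¹).re < 0 := by simpa using hε
  have hε₀ : (ε : ℂ) ≠ 0 := by exact_mod_cast hε.ne'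
  simp_rw [div_mul_eq_mul_div, integral_div, integral_sq_mul_cexp_quadratic hb]
  generalize (∫ t : ℝ, cexp (-(ε : ℂ)⁻¹ * t ^ 2 + overlapLinCoeff ε q₁ p₁ q₂ p₂ * t + d)) = M₀
  simp only [overlapLinCoeff]
  push_cast
  field_simp
  linear_combination 16 * M₀ * (((q₁ : ℂ) + q₂) ^ 2 + ((p₁ : ℂ) - p₂) ^ 2) * Complex.I_sq

/-- Matrix element of the harmonic oscillator potential `|x|²/2` between two
Gaussian wave packets. -/
theorem gaussian_matrix_element_harmonic
    {d : ℕ} (ε : ℝ) (hε : 0 < ε)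
    (q₁ p₁ q₂ p₂ : EuclideanSpace ℝ (Fin d)) :
    ∫ x : EuclideanSpace ℝ (Fin d),
        (starRingEnd ℂ) (gaussWP ε q₁ p₁ x) * ((‖x‖ ^ 2 / 2 : ℝ) : ℂ) *
          gaussWP ε q₂ p₂ x
      = (∑ k : Fin d, (1 / 8 : ℂ) *
          (2 * (ε : ℂ) - (((p₁ k - p₂ k : ℝ) : ℂ) +
            Complex.I * ((q₁ k + q₂ k : ℝ) : ℂ)) ^ 2)) *
        ∫ x : EuclideanSpace ℝ (Fin d),
          (starRingEnd ℂ) (gaussWP ε q₁ p₁ x) * gaussWP ε q₂ p₂ x := by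
  have hb : (-(ε : ℂ)⁻¹).re < 0 := by simpa using hε
  simp_rw [mul_right_comm _ (((‖_‖ ^ 2 / 2 : ℝ)) : ℂ), conj_gaussWP_mul_gaussWP]
  rw [← (PiLp.volume_preserving_toLp (Fin d)).integral_comp
      (MeasurableEquiv.toLp 2 _).measurableEmbedding,
    ← (PiLp.volume_preserving_toLp (Fin d)).integral_comp
      (MeasurableEquiv.toLp 2 _).measurableEmbedding]
  simp only [EuclideanSpace.real_norm_sq_eq, mul_assoc, integral_const_mul]
  rw [mul_left_comm]
  congr 1
  simp only [Complex.ofReal_div, Complex.ofReal_sum, Complex.ofReal_pow, Complex.ofReal_ofNat,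
    Finset.sum_div, mul_comm (∏ _ : Fin d, _)]
  exact integral_sum_mul_prod_eq
    (f := fun k (t : ℝ) ↦ cexp (-(ε : ℂ)⁻¹ * t ^ 2 +
      overlapLinCoeff ε (q₁ k) (p₁ k) (q₂ k) (p₂ k) * t +
        overlapConstCoeff ε (q₁ k) (p₁ k) (q₂ k) (p₂ k)))
    (fun k ↦ integrable_cexp_quadratic' hb _ _)
    (fun k ↦ by simpa only [div_mul_eq_mul_div] using
      (integrable_pow_mul_cexp_quadratic hb _ _ 2).div_const 2)
    (fun k ↦ integral_sq_div_two_mul_overlap hε _ _ _ _ _)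
end

section
/- Let ε > 0 and z₁ = (q₁, p₁), z₂ = (q₂, p₂) ∈ ℝ^d × ℝ^d. Then the matrix element of the torsional potential V(x) = ∑_{k=1}^d (1 − cos(x_k)) between two Gaussian wave packets satisfies ∫_{ℝ^d} conj(g^ε_{z₁}(x)) · [∑_{k=1}^d (1 − cos(x_k))] · g^ε_{z₂}(x) dx = [ ∑_{k=1}^d ( 1 − e^{−ε/4} cosh( (1/2)(p₁ₖ − p₂ₖ) + (i/2)(q₁ₖ + q₂ₖ) ) ) ] · ⟨g^ε_{z₁}, g^ε_{z₂}⟩, where cosh denotes the complex hyperbolic cosine. -/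
open MeasureTheory

/-!
The product `conj g_{z₁} · g_{z₂}` is a constant multiple of the separable complex Gaussian
`exp (∑ⱼ (-xⱼ² / ε + cⱼ xⱼ))` with `ε cⱼ = q₁ⱼ + q₂ⱼ + i (p₂ⱼ - p₁ⱼ)`. Multiplying it by
`exp (w xₖ)` only shifts `cₖ` by `w`, so by the one-dimensional Gaussian integral the overlap gets
multiplied by `exp (ε w² / 4 + ε w cₖ / 2)`. Since
`1 - cos xₖ = 1 - (exp (i xₖ) + exp (-i xₖ)) / 2`, the shifts `w = ± i` combine into
`exp (-ε / 4) cosh (…)`.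
-/

open Complex
open scoped Real ComplexConjugate

section GaussExp

variable {ι : Type*} [Fintype ι] {b : ℂ}

noncomputable def gaussExp (b : ℂ) (c : ι → ℂ) (x : EuclideanSpace ℝ ι) : ℂ :=
  cexp (∑ j, (b * (x j : ℂ) ^ 2 + c j * x j))

lemma gaussExp_toLp (c : ι → ℂ) (x : ι → ℝ) :
    gaussExp b c (WithLp.toLp 2 x) = ∏ j, cexp (b * (x j : ℂ) ^ 2 + c j * x j) := by
  simp [gaussExp, exp_sum]

lemma integrable_gaussExp (hb : b.re < 0) (c : ι → ℂ) : Integrable (gaussExp b c) := by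
  rw [← (PiLp.volume_preserving_toLp ι).integrable_comp_emb
    (MeasurableEquiv.toLp 2 (ι → ℝ)).measurableEmbedding]
  simpa [Function.comp_def, gaussExp_toLp, volume_pi] using
    Integrable.fintype_prod fun j ↦ integrable_cexp_quadratic' hb (c j) 0

lemma integral_gaussExp (hb : b.re < 0) (c : ι → ℂ) :
    ∫ x, gaussExp b c x = ∏ j, (π / -b) ^ (1 / 2 : ℂ) * cexp (-c j ^ 2 / (4 * b)) := by
  rw [← (PiLp.volume_preserving_toLp ι).integral_comp
    (MeasurableEquiv.toLp 2 (ι → ℝ)).measurableEmbedding]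
  simp only [gaussExp_toLp]
  rw [volume_pi, integral_fintype_prod_eq_prod (fun j (t : ℝ) ↦ cexp (b * (t : ℂ) ^ 2 + c j * t))]
  refine Finset.prod_congr rfl fun j _ ↦ ?_
  simpa [neg_div] using integral_cexp_quadratic hb (c j) 0

variable [DecidableEq ι]

lemma gaussExp_mul_cexp (c : ι → ℂ) (k : ι) (w : ℂ) (x : EuclideanSpace ℝ ι) :
    gaussExp b c x * cexp (w * x k) = gaussExp b (Function.update c k (c k + w)) x := by
  have hupdate : Function.update c k (c k + w) = fun j ↦ c j + if j = k then w else 0 := by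
    ext j
    rcases eq_or_ne j k with rfl | hj <;> simp [*]
  simp only [gaussExp, hupdate, ← exp_add, add_mul, ← add_assoc, ite_mul, zero_mul,
    Finset.sum_add_distrib, Finset.sum_ite_eq', Finset.mem_univ, if_true]

lemma integrable_gaussExp_mul_cexp (hb : b.re < 0) (c : ι → ℂ) (k : ι) (w : ℂ) :
    Integrable fun x ↦ gaussExp b c x * cexp (w * x k) := by
  simpa only [gaussExp_mul_cexp] using integrable_gaussExp hb _

lemma integral_gaussExp_mul_cexp (hb : b.re < 0) (c : ι → ℂ) (k : ι) (w : ℂ) :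
    ∫ x, gaussExp b c x * cexp (w * x k)
      = cexp (-(2 * w * c k + w ^ 2) / (4 * b)) * ∫ x, gaussExp b c x := by
  have hb0 : b ≠ 0 := by rintro rfl; simp at hb
  set h : ℂ → ℂ := fun t ↦ (π / -b) ^ (1 / 2 : ℂ) * cexp (-t ^ 2 / (4 * b))
  have hshift : h (c k + w) = cexp (-(2 * w * c k + w ^ 2) / (4 * b)) * h (c k) := by
    simp only [h, mul_left_comm _ ((π / -b) ^ (1 / 2 : ℂ)), ← exp_add]
    congr 2
    field_simp
    ring
  simp_rw [gaussExp_mul_cexp, integral_gaussExp hb]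
  show ∏ j, (h ∘ Function.update c k (c k + w)) j = _ * ∏ j, h (c j)
  rw [Function.comp_update, Finset.prod_update_of_mem (Finset.mem_univ k),
    Finset.prod_eq_mul_prod_sdiff_singleton_of_mem (Finset.mem_univ k), hshift, mul_assoc]
  rfl

end GaussExp

section GaussWP

variable {d : ℕ} {ε : ℝ} (q₁ p₁ q₂ p₂ : EuclideanSpace ℝ (Fin d))

lemma exists_conj_gaussWP_mul_gaussWP_eq :
    ∃ A : ℂ, ∀ x, conj (gaussWP ε q₁ p₁ x) * gaussWP ε q₂ p₂ x
      = A * gaussExp (-(ε : ℂ)⁻¹) (fun k ↦ (q₁ k + q₂ k + I * (p₂ k - p₁ k)) / ε) x := by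
  refine ⟨(((π * ε) ^ (-(d : ℝ) / 4) : ℝ) : ℂ) ^ 2 * cexp (∑ k,
    (-((q₁ k : ℂ) ^ 2 + (q₂ k : ℂ) ^ 2) / (2 * ε) + I * (p₁ k * q₁ k - p₂ k * q₂ k) / ε)),
    fun x ↦ ?_⟩
  have hsq (q : EuclideanSpace ℝ (Fin d)) : ‖x - q‖ ^ 2 = ∑ k, (x k - q k) ^ 2 := by
    simp [EuclideanSpace.norm_sq_eq]
  have hinner (p q : EuclideanSpace ℝ (Fin d)) : inner ℝ p (x - q) = ∑ k, p k * (x k - q k) := by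
    simp [PiLp.inner_apply, mul_comm]
  simp only [gaussWP, gaussExp, map_mul, conj_ofReal, ← exp_conj, map_add, map_div₀, conj_I]
  rw [mul_mul_mul_comm, ← exp_add, ← sq, mul_assoc, ← exp_add, hsq, hsq, hinner, hinner]
  congr 2
  push_cast
  simp only [Finset.sum_div, Finset.mul_sum, neg_div, ← Finset.sum_neg_distrib,
    ← Finset.sum_add_distrib]
  refine Finset.sum_congr rfl fun k _ ↦ ?_
  field_simp
  ring

lemma integrable_conj_gaussWP_mul_gaussWP (hε : 0 < ε) :
    Integrable fun x ↦ conj (gaussWP ε q₁ p₁ x) * gaussWP ε q₂ p₂ x := by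
  obtain ⟨A, hA⟩ := exists_conj_gaussWP_mul_gaussWP_eq (ε := ε) q₁ p₁ q₂ p₂
  simpa only [hA] using (integrable_gaussExp (by simpa using hε) _).const_mul A

lemma integrable_conj_gaussWP_mul_cexp_mul_gaussWP (hε : 0 < ε) (k : Fin d) (w : ℂ) :
    Integrable fun x ↦ conj (gaussWP ε q₁ p₁ x) * cexp (w * x k) * gaussWP ε q₂ p₂ x := by
  obtain ⟨A, hA⟩ := exists_conj_gaussWP_mul_gaussWP_eq (ε := ε) q₁ p₁ q₂ p₂
  simpa only [mul_right_comm _ (cexp _), hA, mul_assoc] using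
    (integrable_gaussExp_mul_cexp (by simpa using hε) _ k w).const_mul A

lemma integral_conj_gaussWP_mul_cexp_mul_gaussWP (hε : 0 < ε) (k : Fin d) (w : ℂ) :
    ∫ x, conj (gaussWP ε q₁ p₁ x) * cexp (w * x k) * gaussWP ε q₂ p₂ x
      = cexp (ε * w ^ 2 / 4 + w * (q₁ k + q₂ k + I * (p₂ k - p₁ k)) / 2)
        * ∫ x, conj (gaussWP ε q₁ p₁ x) * gaussWP ε q₂ p₂ x := by
  obtain ⟨A, hA⟩ := exists_conj_gaussWP_mul_gaussWP_eq (ε := ε) q₁ p₁ q₂ p₂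
  have hb : (-(ε : ℂ)⁻¹).re < 0 := by simpa using hε
  simp only [mul_right_comm _ (cexp _), hA, mul_assoc, integral_const_mul,
    integral_gaussExp_mul_cexp hb]
  rw [mul_left_comm]
  congr 2
  have : (ε : ℂ) ≠ 0 := by exact_mod_cast hε.ne'
  field_simp
  ring

lemma conj_gaussWP_mul_one_sub_cos_mul_gaussWP (k : Fin d) (x : EuclideanSpace ℝ (Fin d)) :
    conj (gaussWP ε q₁ p₁ x) * (1 - cos (x k)) * gaussWP ε q₂ p₂ x
      = conj (gaussWP ε q₁ p₁ x) * gaussWP ε q₂ p₂ x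
        - (conj (gaussWP ε q₁ p₁ x) * cexp (I * x k) * gaussWP ε q₂ p₂ x
          + conj (gaussWP ε q₁ p₁ x) * cexp (-I * x k) * gaussWP ε q₂ p₂ x) / 2 := by
  have h := two_cos (x k : ℂ)
  rw [neg_mul, mul_comm _ I, ← neg_mul] at h
  linear_combination -(conj (gaussWP ε q₁ p₁ x) * gaussWP ε q₂ p₂ x / 2) * h

lemma integrable_conj_gaussWP_mul_one_sub_cos_mul_gaussWP (hε : 0 < ε) (k : Fin d) :
    Integrable fun x ↦ conj (gaussWP ε q₁ p₁ x) * (1 - cos (x k)) * gaussWP ε q₂ p₂ x := by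
  simp_rw [conj_gaussWP_mul_one_sub_cos_mul_gaussWP]
  exact (integrable_conj_gaussWP_mul_gaussWP _ _ _ _ hε).sub
    (((integrable_conj_gaussWP_mul_cexp_mul_gaussWP _ _ _ _ hε k _).add
      (integrable_conj_gaussWP_mul_cexp_mul_gaussWP _ _ _ _ hε k _)).div_const 2)

lemma integral_conj_gaussWP_mul_one_sub_cos_mul_gaussWP (hε : 0 < ε) (k : Fin d) :
    ∫ x, conj (gaussWP ε q₁ p₁ x) * (1 - cos (x k)) * gaussWP ε q₂ p₂ x
      = (1 - cexp (-ε / 4) * cosh ((p₁ k - p₂ k) / 2 + I / 2 * (q₁ k + q₂ k)))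
        * ∫ x, conj (gaussWP ε q₁ p₁ x) * gaussWP ε q₂ p₂ x := by
  set z : ℂ := (p₁ k - p₂ k) / 2 + I / 2 * (q₁ k + q₂ k)
  have hargI : ε * I ^ 2 / 4 + I * (q₁ k + q₂ k + I * (p₂ k - p₁ k)) / 2 = -ε / 4 + z := by
    linear_combination (ε / 4 + (p₂ k - p₁ k) / 2) * I_sq
  have hargNegI :
      ε * (-I) ^ 2 / 4 + -I * (q₁ k + q₂ k + I * (p₂ k - p₁ k)) / 2 = -ε / 4 + -z := by
    linear_combination (ε / 4 - (p₂ k - p₁ k) / 2) * I_sq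
  have hintI := integrable_conj_gaussWP_mul_cexp_mul_gaussWP q₁ p₁ q₂ p₂ hε k I
  have hintNegI := integrable_conj_gaussWP_mul_cexp_mul_gaussWP q₁ p₁ q₂ p₂ hε k (-I)
  simp_rw [conj_gaussWP_mul_one_sub_cos_mul_gaussWP]
  rw [integral_sub (integrable_conj_gaussWP_mul_gaussWP _ _ _ _ hε), integral_div,
    integral_add hintI hintNegI, integral_conj_gaussWP_mul_cexp_mul_gaussWP _ _ _ _ hε,
    integral_conj_gaussWP_mul_cexp_mul_gaussWP _ _ _ _ hε, hargI, hargNegI]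
  · set I₀ := ∫ x, conj (gaussWP ε q₁ p₁ x) * gaussWP ε q₂ p₂ x
    linear_combination (-I₀ / 2) * exp_add (-ε / 4 : ℂ) z
      + (-I₀ / 2) * exp_add (-ε / 4 : ℂ) (-z)
      + (cexp (-ε / 4) * I₀ / 2) * two_cosh z
  · exact (hintI.add hintNegI).div_const 2

end GaussWP

/-- Matrix element of the torsional potential `V(x) = ∑ₖ (1 − cos xₖ)` between
two Gaussian wave packets. -/
theorem gaussian_matrix_element_torsional
    {d : ℕ} (ε : ℝ) (hε : 0 < ε)
    (q₁ p₁ q₂ p₂ : EuclideanSpace ℝ (Fin d)) :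
    ∫ x : EuclideanSpace ℝ (Fin d),
        (starRingEnd ℂ) (gaussWP ε q₁ p₁ x) *
          ((∑ k : Fin d, (1 - Real.cos (x k)) : ℝ) : ℂ) *
          gaussWP ε q₂ p₂ x
      = (∑ k : Fin d,
          (1 - Complex.exp (((-ε / 4 : ℝ) : ℂ)) *
            Complex.cosh ((((p₁ k - p₂ k : ℝ) : ℂ)) / 2 +
              Complex.I / 2 * ((q₁ k + q₂ k : ℝ) : ℂ)))) *
        ∫ x : EuclideanSpace ℝ (Fin d),
          (starRingEnd ℂ) (gaussWP ε q₁ p₁ x) * gaussWP ε q₂ p₂ x := by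
  have hsplit (x : EuclideanSpace ℝ (Fin d)) :
      conj (gaussWP ε q₁ p₁ x) * ((∑ k, (1 - Real.cos (x k)) : ℝ) : ℂ) * gaussWP ε q₂ p₂ x
        = ∑ k, conj (gaussWP ε q₁ p₁ x) * (1 - cos (x k)) * gaussWP ε q₂ p₂ x := by
    push_cast
    rw [Finset.mul_sum, Finset.sum_mul]
  simp_rw [hsplit]
  rw [integral_finsetSum _ fun k _ ↦
    integrable_conj_gaussWP_mul_one_sub_cos_mul_gaussWP q₁ p₁ q₂ p₂ hε k, Finset.sum_mul]
  push_cast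
  exact Finset.sum_congr rfl fun k _ ↦
    integral_conj_gaussWP_mul_one_sub_cos_mul_gaussWP q₁ p₁ q₂ p₂ hε k
end
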